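/- Let f = (α_{n-1}, α_{n-2},..., α_0) be a surjective restricted growth function from [n] onto {0,...,k-1} (read so that α_{n-1} is the first value). For 0 ≤ t ≤ n-2 let m_t = max{α_{n-1},...,α_{t+1}}. Then the number of surjective restricted growth functions from [n] onto {0,...,k-1} that are lexicographically smaller than f equals Σ_{t=0}^{n-2} α_t · E(t, m_t), where E satisfies E(0,m)=[m=k-1] and E(j,m)=(m+1)E(j-1,m)+E(j-1,m+1). -/
import Mathlib


/-- `f : [n] → {0,...,k-1}` is a surjective restricted growth function. -/
def IsRGF (n k : ℕ) (f : Fin n → ℕ) : Prop :=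
  (∀ i : Fin n, (i : ℕ) = 0 → f i = 0) ∧
  (∀ i : Fin n, 0 < (i : ℕ) →
    f i ≤ 1 + (Finset.univ.filter fun j => j < i).sup f) ∧
  (∀ i, f i < k) ∧ (∀ m, m < k → ∃ i, f i = m)

/-- Lexicographic order (strict) on sequences indexed by `Fin n`. -/
def lexLt {n : ℕ} (f g : Fin n → ℕ) : Prop :=
  ∃ i, (∀ j, j < i → f j = g j) ∧ f i < g i

/-- `E(0,m) = [m = k-1]`, `E(j,m) = (m+1)·E(j-1,m) + E(j-1,m+1)`. -/
def E (k : ℕ) : ℕ → ℕ → ℕ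
  | 0, m => if m = k - 1 then 1 else 0
  | j + 1, m => (m + 1) * E k j m + E k j (m + 1)

open Finset

/-- running max before position `i` -/
def pmax {j : ℕ} (h : Fin j → ℕ) (i : Fin j) : ℕ :=
  (Finset.univ.filter fun l => l < i).sup h

lemma pmax_eq {j : ℕ} (h : Fin j → ℕ) (i : Fin j) :
    (Finset.univ.filter fun l => l < i).sup h = pmax h i := rfl

open scoped Classical

/-- valid completion after running max `m`, total max = `k-1` -/
def CompP (k m : ℕ) {j : ℕ} (h : Fin j → ℕ) : Prop :=
  (∀ i, h i ≤ 1 + (m ⊔ pmax h i)) ∧ m ⊔ Finset.univ.sup h = k - 1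

noncomputable def compF (k m j : ℕ) : Finset (Fin j → ℕ) :=
  (Fintype.piFinset fun _ : Fin j => Finset.range k).filter (fun h => CompP k m h)

lemma pmax_zero {j : ℕ} (h : Fin (j+1) → ℕ) : pmax h 0 = 0 := by
  unfold pmax
  have he : (Finset.univ.filter fun l : Fin (j+1) => l < 0) = ∅ :=
    Finset.filter_false_of_mem (fun l _ => Fin.not_lt_zero l)
  rw [he]
  rfl

lemma filter_lt_succ {j : ℕ} (i : Fin j) :
    (Finset.univ.filter fun l : Fin (j+1) => l < i.succ)
      = Finset.cons 0 ((Finset.univ.filter fun l : Fin j => l < i).map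
          ⟨Fin.succ, Fin.succ_injective _⟩)
          (by simp [Fin.succ_ne_zero, eq_comm]) := by
  ext l
  simp only [Finset.mem_filter, Finset.mem_univ, true_and, Finset.mem_cons,
    Finset.mem_map, Function.Embedding.coeFn_mk]
  induction l using Fin.cases with
  | zero => simp [Fin.succ_pos, Fin.succ_ne_zero, eq_comm]
  | succ l' => simp [Fin.succ_lt_succ_iff, Fin.succ_ne_zero, Fin.succ_inj]

lemma cons_comp_succ {j : ℕ} (c : ℕ) (h : Fin j → ℕ) :
    (Fin.cons c h : Fin (j+1) → ℕ) ∘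
      (⟨Fin.succ, Fin.succ_injective _⟩ : Fin j ↪ Fin (j+1)) = h := by
  ext x; simp

lemma pmax_cons_succ {j : ℕ} (c : ℕ) (h : Fin j → ℕ) (i : Fin j) :
    pmax (Fin.cons c h) i.succ = c ⊔ pmax h i := by
  unfold pmax
  rw [filter_lt_succ, Finset.sup_cons, Finset.sup_map, cons_comp_succ, Fin.cons_zero]

lemma univSup_cons {j : ℕ} (c : ℕ) (h : Fin j → ℕ) :
    Finset.univ.sup (Fin.cons c h) = c ⊔ Finset.univ.sup h := by
  rw [Fin.univ_succ, Finset.sup_cons, Finset.sup_map, cons_comp_succ, Fin.cons_zero]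

lemma compP_cons {k m j : ℕ} (c : ℕ) (h : Fin j → ℕ) :
    CompP k m (Fin.cons c h) ↔ c ≤ m + 1 ∧ CompP k (m ⊔ c) h := by
  constructor
  · rintro ⟨hg, hs⟩
    have h0 := hg 0
    rw [pmax_zero, Fin.cons_zero] at h0
    refine ⟨by omega, fun i => ?_, ?_⟩
    · have h1 := hg i.succ
      rw [pmax_cons_succ, Fin.cons_succ] at h1
      rw [sup_assoc]
      exact h1
    · rw [univSup_cons, ← sup_assoc] at hs
      exact hs
  · rintro ⟨hc, hg, hs⟩
    refine ⟨fun i => ?_, ?_⟩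
    · induction i using Fin.cases with
      | zero => rw [pmax_zero, Fin.cons_zero]; omega
      | succ i' =>
        have h1 := hg i'
        rw [pmax_cons_succ, Fin.cons_succ, ← sup_assoc]
        exact h1
    · rw [univSup_cons, ← sup_assoc]
      exact hs

lemma mem_compF {k m j : ℕ} (hk : 1 ≤ k) (g : Fin j → ℕ) :
    g ∈ compF k m j ↔ CompP k m g := by
  unfold compF
  rw [Finset.mem_filter]
  constructor
  · exact fun h => h.2
  · intro h
    refine ⟨?_, h⟩
    rw [Fintype.mem_piFinset]
    intro i
    rw [Finset.mem_range]
    have h1 : g i ≤ Finset.univ.sup g := Finset.le_sup (Finset.mem_univ i)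
    have h2 : Finset.univ.sup g ≤ m ⊔ Finset.univ.sup g := le_sup_right
    have := h.2
    omega

lemma lexLt_cons {j : ℕ} (a b : ℕ) (h h' : Fin j → ℕ) :
    lexLt (Fin.cons a h) (Fin.cons b h') ↔ a < b ∨ (a = b ∧ lexLt h h') := by
  constructor
  · rintro ⟨i, hag, hlt⟩
    induction i using Fin.cases with
    | zero => left; simpa using hlt
    | succ i' =>
      right
      have hab : a = b := by simpa using hag 0 (Fin.succ_pos i')
      refine ⟨hab, i', fun l hl => ?_, by simpa using hlt⟩
      simpa using hag l.succ (Fin.succ_lt_succ_iff.mpr hl)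
  · rintro (hab | ⟨rfl, i, hag, hlt⟩)
    · exact ⟨0, fun l hl => absurd hl (Fin.not_lt_zero l), by simpa using hab⟩
    · refine ⟨i.succ, fun l hl => ?_, by simpa using hlt⟩
      induction l using Fin.cases with
      | zero => simp
      | succ l' => simpa using hag l' (Fin.succ_lt_succ_iff.mp hl)

/-- decomposition of `compF` filtered by first value `< c` -/
lemma filter_fst_lt {k m j : ℕ} (hk : 1 ≤ k) (c : ℕ) (hc : c ≤ m + 2) :
    ((compF k m (j+1)).filter fun g => g 0 < c)
      = (Finset.range c).biUnion
          (fun v => (compF k (m ⊔ v) j).image (fun h : Fin j → ℕ => (Fin.cons v h : Fin (j+1) → ℕ))) := by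
  ext g
  simp only [Finset.mem_filter, Finset.mem_biUnion, Finset.mem_range, Finset.mem_image]
  constructor
  · rintro ⟨hg, h0⟩
    rw [mem_compF hk] at hg
    have hcons : CompP k m (Fin.cons (g 0) (Fin.tail g)) := by
      rwa [Fin.cons_self_tail]
    rw [compP_cons] at hcons
    exact ⟨g 0, h0, Fin.tail g, (mem_compF hk _).mpr hcons.2, Fin.cons_self_tail g⟩
  · rintro ⟨v, hv, h, hh, rfl⟩
    rw [mem_compF hk] at hh ⊢
    refine ⟨(compP_cons v h).mpr ⟨by omega, hh⟩, by simpa using hv⟩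

lemma card_compF {k : ℕ} (hk : 1 ≤ k) : ∀ j m, (compF k m j).card = E k j m := by
  intro j
  induction j with
  | zero =>
    intro m
    rcases eq_or_ne m (k-1) with hm | hm
    · have he : compF k m 0 = {![]} := by
        ext g
        rw [mem_compF hk]
        simp only [Finset.mem_singleton]
        constructor
        · intro _; exact Subsingleton.elim _ _
        · rintro rfl
          exact ⟨fun i => i.elim0, by simp [hm]⟩
      rw [he, E]
      simp [hm]
    · have he : compF k m 0 = ∅ := by
        ext g
        rw [mem_compF hk]
        simp only [Finset.notMem_empty, iff_false]
        rintro ⟨-, hs⟩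
        apply hm
        simpa using hs
      rw [he, E]
      simp [hm]
  | succ j ih =>
    intro m
    have hfull : (compF k m (j+1)).filter (fun g => g 0 < m + 2) = compF k m (j+1) := by
      apply Finset.filter_true_of_mem
      intro g hg
      rw [mem_compF hk] at hg
      have := hg.1 0
      rw [pmax_zero] at this
      omega
    have hdisj : ∀ a ∈ Finset.range (m+2), ∀ b ∈ Finset.range (m+2), a ≠ b →
        Disjoint ((compF k (m ⊔ a) j).image (fun h : Fin j → ℕ => (Fin.cons a h : Fin (j+1) → ℕ)))
          ((compF k (m ⊔ b) j).image (fun h : Fin j → ℕ => (Fin.cons b h : Fin (j+1) → ℕ))) := by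
      intro a _ b _ hab
      simp only [Finset.disjoint_left]
      rintro g hga hgb
      rw [Finset.mem_image] at hga hgb
      obtain ⟨x, -, rfl⟩ := hga
      obtain ⟨y, -, hy⟩ := hgb
      have hba : b = a := by simpa using congrFun hy 0
      exact hab hba.symm
    rw [← hfull, filter_fst_lt hk (m+2) le_rfl, Finset.card_biUnion hdisj]
    have hterm : ∀ v ∈ Finset.range (m+2),
        ((compF k (m ⊔ v) j).image (fun h : Fin j → ℕ => (Fin.cons v h : Fin (j+1) → ℕ))).card
          = E k j (m ⊔ v) := by
      intro v hv
      rw [Finset.card_image_of_injective _ (Fin.cons_right_injective (α := fun _ : Fin (j+1) => ℕ) v), ih]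
    rw [Finset.sum_congr rfl hterm, Finset.sum_range_succ]
    have hcst : ∀ v ∈ Finset.range (m+1), E k j (m ⊔ v) = E k j m := by
      intro v hv
      rw [Finset.mem_range] at hv
      congr 1
      omega
    rw [Finset.sum_congr rfl hcst, Finset.sum_const, Finset.card_range]
    have h1 : m ⊔ (m+1) = m + 1 := by omega
    rw [h1, E]
    ring

lemma card_filter_fst_lt {k m j : ℕ} (hk : 1 ≤ k) (c : ℕ) (hc : c ≤ m + 2) :
    ((compF k m (j+1)).filter fun g => g 0 < c).card
      = ∑ v ∈ Finset.range c, E k j (m ⊔ v) := by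
  have hdisj : ∀ a ∈ Finset.range c, ∀ b ∈ Finset.range c, a ≠ b →
      Disjoint ((compF k (m ⊔ a) j).image (fun h : Fin j → ℕ => (Fin.cons a h : Fin (j+1) → ℕ)))
        ((compF k (m ⊔ b) j).image (fun h : Fin j → ℕ => (Fin.cons b h : Fin (j+1) → ℕ))) := by
    intro a _ b _ hab
    simp only [Finset.disjoint_left]
    rintro g hga hgb
    rw [Finset.mem_image] at hga hgb
    obtain ⟨x, -, rfl⟩ := hga
    obtain ⟨y, -, hy⟩ := hgb
    have hba : b = a := by simpa using congrFun hy 0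
    exact hab hba.symm
  rw [filter_fst_lt hk c hc, Finset.card_biUnion hdisj]
  apply Finset.sum_congr rfl
  intro v hv
  rw [Finset.card_image_of_injective _
    (Fin.cons_right_injective (α := fun _ : Fin (j+1) => ℕ) v), card_compF hk]

lemma filter_eq_cons {k m j : ℕ} (hk : 1 ≤ k) (c : ℕ) (hcm : c ≤ m + 1)
    (P : (Fin j → ℕ) → Prop) :
    ((compF k m (j+1)).filter fun g => g 0 = c ∧ P (Fin.tail g))
      = ((compF k (m ⊔ c) j).filter P).image
          (fun h : Fin j → ℕ => (Fin.cons c h : Fin (j+1) → ℕ)) := by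
  ext g
  simp only [Finset.mem_filter, Finset.mem_image]
  constructor
  · rintro ⟨hg, h0, hP⟩
    rw [mem_compF hk] at hg
    have hcons : CompP k m (Fin.cons (g 0) (Fin.tail g)) := by
      rwa [Fin.cons_self_tail]
    rw [compP_cons] at hcons
    refine ⟨Fin.tail g, ⟨(mem_compF hk _).mpr ?_, hP⟩, by rw [← h0, Fin.cons_self_tail]⟩
    rw [← h0]
    exact hcons.2
  · rintro ⟨h, ⟨hh, hP⟩, rfl⟩
    rw [mem_compF hk] at hh ⊢
    exact ⟨(compP_cons c h).mpr ⟨hcm, hh⟩, Fin.cons_zero _ _, by rwa [Fin.tail_cons]⟩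

lemma rank_lemma {k : ℕ} (hk : 1 ≤ k) : ∀ j m (f : Fin j → ℕ), CompP k m f →
    ((compF k m j).filter (fun g => lexLt g f)).card
      = ∑ i : Fin j, f i * E k (j - 1 - (i : ℕ)) (m ⊔ pmax f i) := by
  intro j
  induction j with
  | zero =>
    intro m f _
    have he : ((compF k m 0).filter (fun g => lexLt g f)) = ∅ := by
      apply Finset.filter_false_of_mem
      rintro g - ⟨i, -, -⟩
      exact i.elim0
    rw [he]
    simp
  | succ j ih =>
    intro m f hf
    obtain ⟨c, f₂, rfl⟩ : ∃ c f₂, f = Fin.cons c f₂ :=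
      ⟨f 0, Fin.tail f, (Fin.cons_self_tail f).symm⟩
    rw [compP_cons] at hf
    obtain ⟨hc, hf₂⟩ := hf
    have hsplit : ∀ g : Fin (j+1) → ℕ,
        lexLt g (Fin.cons c f₂) ↔ (g 0 < c ∨ (g 0 = c ∧ lexLt (Fin.tail g) f₂)) := by
      intro g
      conv_lhs => rw [← Fin.cons_self_tail g]
      rw [lexLt_cons]
    have h1 : ((compF k m (j+1)).filter (fun g => lexLt g (Fin.cons c f₂)))
        = (compF k m (j+1)).filter
            (fun g => g 0 < c ∨ (g 0 = c ∧ lexLt (Fin.tail g) f₂)) := by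
      apply Finset.filter_congr
      intro g _
      rw [hsplit]
    rw [h1, Finset.filter_or, Finset.card_union_of_disjoint]
    · -- card of each part
      rw [card_filter_fst_lt hk c (by omega),
        filter_eq_cons hk c hc (fun h => lexLt h f₂),
        Finset.card_image_of_injective _
          (Fin.cons_right_injective (α := fun _ : Fin (j+1) => ℕ) c),
        ih (m ⊔ c) f₂ hf₂]
      -- evaluate the range sum
      have h2 : ∀ v ∈ Finset.range c, E k j (m ⊔ v) = E k j m := by
        intro v hv
        rw [Finset.mem_range] at hv
        congr 1
        omega
      rw [Finset.sum_congr rfl h2, Finset.sum_const, Finset.card_range, smul_eq_mul]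
      -- RHS
      rw [Fin.sum_univ_succ]
      have h3 : (Fin.cons c f₂ : Fin (j+1) → ℕ) 0 * E k (j + 1 - 1 - ((0 : Fin (j+1)) : ℕ))
          (m ⊔ pmax (Fin.cons c f₂) 0) = c * E k j m := by
        rw [Fin.cons_zero, pmax_zero]
        norm_num
      rw [h3]
      congr 1
      apply Finset.sum_congr rfl
      intro i _
      rw [Fin.cons_succ, pmax_cons_succ]
      have h4 : j + 1 - 1 - ((i.succ : Fin (j+1)) : ℕ) = j - 1 - (i : ℕ) := by
        simp [Fin.val_succ]
        omega
      rw [h4, ← sup_assoc]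
    · simp only [Finset.disjoint_left, Finset.mem_filter]
      rintro g ⟨-, hlt⟩ ⟨-, heq, -⟩
      omega

lemma attain {n : ℕ} (g : Fin (n+1) → ℕ) (h0 : g 0 = 0)
    (hg : ∀ i, g i ≤ 1 + pmax g i) :
    ∀ m, m ≤ Finset.univ.sup g → ∃ i, g i = m := by
  intro m
  induction m with
  | zero => exact fun _ => ⟨0, h0⟩
  | succ m _ =>
    intro hm
    have hne : (Finset.univ.filter fun i : Fin (n+1) => m + 1 ≤ g i).Nonempty := by
      obtain ⟨i0, -, hi0⟩ :=
        Finset.exists_mem_eq_sup Finset.univ ⟨0, Finset.mem_univ 0⟩ g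
      exact ⟨i0, Finset.mem_filter.mpr ⟨Finset.mem_univ _, by omega⟩⟩
    have hmem := Finset.min'_mem _ hne
    rw [Finset.mem_filter] at hmem
    set i := Finset.min' _ hne with hi
    have hlt : ∀ l, l < i → g l ≤ m := by
      intro l hl
      by_contra hcon
      have hle : i ≤ l := Finset.min'_le _ _ (Finset.mem_filter.mpr ⟨Finset.mem_univ _, by omega⟩)
      exact absurd hl (not_lt.mpr hle)
    have hpm : pmax g i ≤ m := by
      apply Finset.sup_le
      intro l hl
      rw [Finset.mem_filter] at hl
      exact hlt l hl.2
    have hgi := hg i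
    exact ⟨i, by omega⟩

lemma isRGF_iff {n k : ℕ} (hk : 1 ≤ k) (g : Fin (n+1) → ℕ) :
    IsRGF (n+1) k g ↔ (g 0 = 0 ∧ CompP k 0 g) := by
  constructor
  · rintro ⟨h1, h2, h3, h4⟩
    have h0 : g 0 = 0 := h1 0 rfl
    refine ⟨h0, fun i => ?_, ?_⟩
    · rcases Nat.eq_zero_or_pos (i : ℕ) with hi | hi
      · have hz : g i = 0 := h1 i hi
        rw [hz]
        omega
      · have := h2 i hi
        have hzs : (0 : ℕ) ⊔ pmax g i = pmax g i := by simp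
        rw [hzs]
        exact this
    · have hzs : (0 : ℕ) ⊔ Finset.univ.sup g = Finset.univ.sup g := by simp
      rw [hzs]
      apply le_antisymm
      · apply Finset.sup_le
        intro i _
        have := h3 i
        omega
      · obtain ⟨i, hi⟩ := h4 (k-1) (by omega)
        rw [← hi]
        exact Finset.le_sup (Finset.mem_univ i)
  · rintro ⟨h0, hg, hs⟩
    have hsup : Finset.univ.sup g = k - 1 := by simpa using hs
    have hgi : ∀ i, g i ≤ 1 + pmax g i := by
      intro i
      have := hg i
      simpa using this
    refine ⟨?_, ?_, ?_, ?_⟩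
    · intro i hi
      have : i = 0 := Fin.ext (by simpa using hi)
      rw [this]
      exact h0
    · intro i _
      exact hgi i
    · intro i
      have h1 : g i ≤ Finset.univ.sup g := Finset.le_sup (Finset.mem_univ i)
      omega
    · intro m hm
      exact attain g h0 hgi m (by omega)

/-- The number of surjective restricted growth functions from `[n]` onto
`{0,...,k-1}` lexicographically smaller than `f = (α_{n-1},...,α_0)` equals
`Σ_{t=0}^{n-2} α_t · E(t, m_t)` where `m_t` is the maximum of the values
preceding `α_t`.  (Here `f i = α_{n-1-i}`, so position `i` contributes
`f i · E(n-1-i, max of f on positions < i)`; the first position contributes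
nothing since `α_{n-1} = 0`.) -/
theorem stmt16 (n k : ℕ) (hn : 1 ≤ n) (hk : 1 ≤ k) (f : Fin n → ℕ)
    (hf : IsRGF n k f) :
    Nat.card {g : Fin n → ℕ // IsRGF n k g ∧ lexLt g f} =
      ∑ i : Fin n,
        f i * E k (n - 1 - (i : ℕ))
          ((Finset.univ.filter fun j => j < i).sup f) := by
  cases n with
  | zero => exact absurd hn (by omega)
  | succ n =>
    rw [isRGF_iff hk] at hf
    obtain ⟨hf0, hfC⟩ := hf
    obtain ⟨f₂, rfl⟩ : ∃ f₂, f = Fin.cons 0 f₂ := by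
      refine ⟨Fin.tail f, ?_⟩
      rw [← hf0]
      exact (Fin.cons_self_tail f).symm
    have hf₂C : CompP k 0 f₂ := by
      have := (compP_cons (k := k) (m := 0) 0 f₂).mp hfC
      simpa using this.2
    -- identify the set with a finset
    have hset : {g : Fin (n+1) → ℕ | IsRGF (n+1) k g ∧ lexLt g (Fin.cons 0 f₂)}
        = ↑((compF k 0 (n+1)).filter fun g => g 0 = 0 ∧ lexLt (Fin.tail g) f₂) := by
      ext g
      simp only [Set.mem_setOf_eq, Finset.coe_filter, mem_compF hk, isRGF_iff hk]
      constructor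
      · rintro ⟨⟨h0, hC⟩, hlex⟩
        refine ⟨hC, h0, ?_⟩
        rw [← Fin.cons_self_tail g, h0] at hlex
        rcases (lexLt_cons _ _ _ _).mp hlex with h | ⟨-, h⟩
        · omega
        · exact h
      · rintro ⟨hC, h0, hlex⟩
        refine ⟨⟨h0, hC⟩, ?_⟩
        rw [← Fin.cons_self_tail g, h0]
        exact (lexLt_cons _ _ _ _).mpr (Or.inr ⟨rfl, hlex⟩)
    have hcard : Nat.card {g : Fin (n+1) → ℕ // IsRGF (n+1) k g ∧ lexLt g (Fin.cons 0 f₂)}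
        = ((compF k 0 (n+1)).filter fun g => g 0 = 0 ∧ lexLt (Fin.tail g) f₂).card := by
      have h1 := Nat.card_coe_set_eq
        {g : Fin (n+1) → ℕ | IsRGF (n+1) k g ∧ lexLt g (Fin.cons 0 f₂)}
      have h2 : ({g : Fin (n+1) → ℕ | IsRGF (n+1) k g ∧ lexLt g (Fin.cons 0 f₂)}).ncard
          = ((compF k 0 (n+1)).filter fun g => g 0 = 0 ∧ lexLt (Fin.tail g) f₂).card := by
        rw [hset, Set.ncard_coe_finset]
      exact h1.trans h2
    have h3 : ((compF k 0 (n+1)).filter fun g => g 0 = 0 ∧ lexLt (Fin.tail g) f₂)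
        = ((compF k ((0:ℕ) ⊔ 0) n).filter (fun h => lexLt h f₂)).image
            (fun h : Fin n → ℕ => (Fin.cons 0 h : Fin (n+1) → ℕ)) :=
      filter_eq_cons (k := k) (m := 0) (j := n) hk 0 (Nat.zero_le 1) (fun h => lexLt h f₂)
    have hzz : (0:ℕ) ⊔ 0 = 0 := by simp
    rw [hzz] at h3
    rw [hcard, h3,
      Finset.card_image_of_injective _
        (Fin.cons_right_injective (α := fun _ : Fin (n+1) => ℕ) 0),
      rank_lemma hk n 0 f₂ hf₂C]
    clear hcard hset h3
    -- now match the sums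
    rw [Fin.sum_univ_succ]
    simp only [pmax_eq, Fin.cons_zero, zero_mul, zero_add]
    apply Finset.sum_congr rfl
    intro i _
    rw [Fin.cons_succ, pmax_cons_succ]
    have hidx : n + 1 - 1 - ((i.succ : Fin (n+1)) : ℕ) = n - 1 - (i : ℕ) := by
      simp only [Fin.val_succ]
      omega
    rw [hidx]
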